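/- Let G be a 2-connected graph whose longest cycle has length at most k. Then every path in G has fewer than k² vertices. -/

import Mathlib

open SimpleGraph Set

/-- The monochromatic subgraph of `G` under colouring `C`. -/
def monoSubgraph {V α : Type*} (G : SimpleGraph V) (C : V → α) : SimpleGraph V where
  Adj a b := G.Adj a b ∧ C a = C b
  symm := ⟨fun _ _ h => ⟨h.1.symm, h.2.symm⟩⟩
  loopless := ⟨fun a h => G.ne_of_adj h.1 rfl⟩

/-- The colouring `C` of `G` has defect at most `d`: every monochromatic component has
maximum degree at most `d` (equivalently, every vertex has at most `d` neighbours of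
its own colour). -/
def HasDefect {V α : Type*} (G : SimpleGraph V) (C : V → α) (d : ℕ) : Prop :=
  ∀ v, {w | G.Adj v w ∧ C w = C v}.ncard ≤ d

/-- The colouring `C` of `G` has clustering at most `c`: every monochromatic component
has at most `c` vertices. -/
def HasClustering {V α : Type*} (G : SimpleGraph V) (C : V → α) (c : ℕ) : Prop :=
  ∀ v, {w | (monoSubgraph G C).Reachable v w}.ncard ≤ c

/-- Feedback vertex number at most `k`. -/
def FvnLE {V : Type*} (G : SimpleGraph V) (k : ℕ) : Prop :=
  ∃ A : Set V, A.Finite ∧ A.ncard ≤ k ∧ (G.induce Aᶜ).IsAcyclic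

/-- `H` is a minor of `G`, via branch sets. -/
def IsMinorOf {W V : Type*} (H : SimpleGraph W) (G : SimpleGraph V) : Prop :=
  ∃ B : W → Set V,
    (∀ w, (B w).Nonempty) ∧
    (Pairwise fun w w' => Disjoint (B w) (B w')) ∧
    (∀ w, (G.induce (B w)).Connected) ∧
    (∀ w w', H.Adj w w' → ∃ a ∈ B w, ∃ b ∈ B w', G.Adj a b)

/-- Treedepth at most `k`: there is a forest (ancestor) partial order `r` of height
at most `k` such that the endpoints of every edge are comparable. -/
def TreedepthLE {V : Type*} (G : SimpleGraph V) (k : ℕ) : Prop :=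
  ∃ r : V → V → Prop,
    (∀ v, r v v) ∧
    (∀ a b c, r a b → r b c → r a c) ∧
    (∀ a b, r a b → r b a → a = b) ∧
    (∀ v a b, r a v → r b v → r a b ∨ r b a) ∧
    (∀ v, {u | r u v}.Finite ∧ {u | r u v}.ncard ≤ k) ∧
    (∀ a b, G.Adj a b → r a b ∨ r b a)

/-- Pathwidth at most `k`, via path decompositions. -/
def PathwidthLE {V : Type*} (G : SimpleGraph V) (k : ℕ) : Prop :=
  ∃ (n : ℕ) (B : Fin n → Set V),
    (∀ v, ∃ i, v ∈ B i) ∧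
    (∀ a b, G.Adj a b → ∃ i, a ∈ B i ∧ b ∈ B i) ∧
    (∀ i j l : Fin n, i ≤ j → j ≤ l → ∀ v, v ∈ B i → v ∈ B l → v ∈ B j) ∧
    (∀ i, (B i).ncard ≤ k + 1)

/-- `w` is 2-reachable from `v` with respect to the order `r`. -/
def TwoReach {V : Type*} (G : SimpleGraph V) (r : V → V → Prop) (v w : V) : Prop :=
  w = v ∨ (r w v ∧ (G.Adj v w ∨ ∃ u, r v u ∧ u ≠ v ∧ G.Adj v u ∧ G.Adj u w))

/-- The 2-strong colouring number `col₂(G)`. -/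
noncomputable def col2 {V : Type*} (G : SimpleGraph V) : ℕ :=
  sInf {m | ∃ r : V → V → Prop, IsLinearOrder V r ∧ ∀ v, {w | TwoReach G r v w}.ncard ≤ m}

/-- `G` contains a complete bipartite subgraph `K_{s,t}`. -/
def HasKstSubgraph {V : Type*} (G : SimpleGraph V) (s t : ℕ) : Prop :=
  ∃ (A B : Finset V), Disjoint A B ∧ A.card = s ∧ B.card = t ∧
    ∀ a ∈ A, ∀ b ∈ B, G.Adj a b

/-- `x` is a prefix of `y`, as nodes of the complete `d`-ary tree of height `n`. -/
def SeqPrefix {n d : ℕ} (x y : Σ i : Fin n, Fin (i : ℕ) → Fin d) : Prop :=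
  ∃ h : (x.1 : ℕ) ≤ (y.1 : ℕ), ∀ a : Fin (x.1 : ℕ), y.2 (Fin.castLE h a) = x.2 a

/-- The graph `H^(d)`, on the nodes of the complete `d`-ary tree of height `n`:
on each root–leaf path `(x_1, …, x_n)`, `x_i x_j` is an edge iff `v_i v_j ∈ E(H)`. -/
def HdGraph (n d : ℕ) (H : SimpleGraph (Fin n)) :
    SimpleGraph (Σ i : Fin n, Fin (i : ℕ) → Fin d) where
  Adj x y := H.Adj x.1 y.1 ∧ (SeqPrefix x y ∨ SeqPrefix y x)
  symm := ⟨fun _ _ h => ⟨h.1.symm, h.2.symm⟩⟩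
  loopless := ⟨fun x h => H.ne_of_adj h.1 rfl⟩

/-- Planarity, via Wagner's characterisation: no `K₅` minor and no `K_{3,3}` minor. -/
def IsPlanarWagner {V : Type*} (G : SimpleGraph V) : Prop :=
  ¬ IsMinorOf (⊤ : SimpleGraph (Fin 5)) G ∧
  ¬ IsMinorOf (completeBipartiteGraph (Fin 3) (Fin 3)) G

/-- The independence number. -/
noncomputable def indepNum {V : Type*} (H : SimpleGraph V) : ℕ :=
  sSup {m | ∃ s : Finset V, s.card = m ∧ ∀ a ∈ s, ∀ b ∈ s, a ≠ b → ¬ H.Adj a b}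


/-!
Any two vertices of a 2-connected graph lie on a common cycle, so the ends `u ≠ v` of a path
`P` lie on a cycle of length at most `k`, one of whose arcs is a `u`-`v` path `Q` with fewer
than `k` edges. If `P` leaves `u` along the edge `uw` and first meets `Q` again at `x`, this
excursion closes a cycle with the segment of `Q` from `u` to `x`, so it has at most `k - 1`
edges; continuing from `x` gives `|P| ≤ (k - 1) |Q| ≤ (k - 1)²`.
-/

namespace SimpleGraph

variable {V : Type*} {G : SimpleGraph V}

namespace Walk

theorem IsPath.start_notMem_tail_support {u v : V} {p : G.Walk u v} (hp : p.IsPath) :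
    u ∉ p.support.tail := by
  have hnd := hp.support_nodup
  rw [← cons_tail_support] at hnd
  exact (List.nodup_cons.mp hnd).1

theorem IsPath.append {u v w : V} {p : G.Walk u v} {q : G.Walk v w} (hp : p.IsPath)
    (hq : q.IsPath) (hpq : ∀ x ∈ p.support, x ∈ q.support → x = v) : (p.append q).IsPath := by
  rw [isPath_def, support_append]
  refine hp.support_nodup.append hq.support_nodup.tail fun x hxp hxq => ?_
  obtain rfl := hpq x hxp (List.mem_of_mem_tail hxq)
  exact hq.start_notMem_tail_support hxq

theorem exists_eq_append_of_end_mem {u v : V} (p : G.Walk u v) {S : Set V} (hv : v ∈ S) :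
    ∃ x ∈ S, ∃ (q : G.Walk u x) (r : G.Walk x v),
      p = q.append r ∧ ∀ y ∈ q.support, y ∈ S → y = x := by
  induction p with
  | nil => exact ⟨_, hv, nil, nil, rfl, by simp⟩
  | @cons u w v h p ih =>
    by_cases hu : u ∈ S
    · exact ⟨u, hu, nil, cons h p, rfl, by simp⟩
    · obtain ⟨x, hx, q, r, rfl, hq⟩ := ih hv
      refine ⟨x, hx, cons h q, r, rfl, fun y hy hyS => ?_⟩
      rcases List.mem_cons.mp (support_cons h q ▸ hy) with rfl | hy
      · exact absurd hyS hu
      · exact hq y hy hyS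

theorem IsCycle.exists_isPath_length_lt {c u v : V} {C : G.Walk c c} (hC : C.IsCycle)
    (hu : u ∈ C.support) (hv : v ∈ C.support) (huv : u ≠ v) :
    ∃ Q : G.Walk u v, Q.IsPath ∧ Q.length < C.length := by
  classical
  have hv' : v ∈ (C.rotate u hu).support := (mem_support_rotate_iff ..).mpr hv
  exact ⟨_, (hC.rotate hu).isPath_takeUntil hv',
    length_rotate C u hu ▸ length_takeUntil_lt_length hv' huv.symm⟩

theorem IsCycle.exists_isPath_mem_support {c x w v : V} {C : G.Walk c c} (hC : C.IsCycle)
    (hx : x ∈ C.support) (hw : w ∈ C.support) (hv : v ∈ C.support) (hxw : x ≠ w) :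
    ∃ B : G.Walk x w, B.IsPath ∧ v ∈ B.support ∧ ∀ y ∈ B.support, y ∈ C.support := by
  classical
  set C' := C.rotate x hx
  have hC' : C'.IsCycle := hC.rotate hx
  have hmem (y : V) : y ∈ C'.support ↔ y ∈ C.support := mem_support_rotate_iff ..
  have hw' : w ∈ C'.support := (hmem w).mpr hw
  have hsplit := C'.take_spec hw'
  have hv' : v ∈ C'.support := (hmem v).mpr hv
  rw [← hsplit, mem_support_append_iff] at hv'
  rcases hv' with hv₁ | hv₂
  · exact ⟨_, hC'.isPath_takeUntil hw', hv₁,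
      fun y hy => (hmem y).mp (support_takeUntil_subset_support _ _ hy)⟩
  · have hA₂ : (C'.dropUntil w hw').IsPath :=
      (hsplit ▸ hC').isPath_of_append_right (not_nil_of_ne hxw)
    refine ⟨_, hA₂.reverse, by simpa using hv₂, fun y hy => (hmem y).mp ?_⟩
    exact support_dropUntil_subset_support _ _ (by simpa using hy)

theorem IsPath.isCycle_cons_append_reverse {u w x : V} (huw : G.Adj u w) {W : G.Walk w x}
    {Q : G.Walk u x} (hW : W.IsPath) (hQ : Q.IsPath) (hux : u ≠ x)
    (hWQ : ∀ y ∈ W.support, y ∈ Q.support → y = x) (hW₀ : W.length ≠ 0) :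
    ((cons huw W).append Q.reverse).IsCycle := by
  have huW : u ∉ W.support := fun hu => hux (hWQ u hu Q.start_mem_support)
  refine (cons_isPath_iff huw W |>.mpr ⟨hW, huW⟩).isCycle_append hQ.reverse
    (fun y hyW hyQ => ?_) (.inl (by rw [length_cons]; omega))
  rw [support_cons, List.tail_cons] at hyW
  obtain rfl := hWQ y hyW (by simpa using List.mem_of_mem_tail hyQ)
  exact hQ.reverse.start_notMem_tail_support hyQ

theorem IsPath.length_le_length_mul {k : ℕ} (hk : 2 ≤ k)
    (hcirc : ∀ (c : V) (C : G.Walk c c), C.IsCycle → C.length ≤ k) {u v : V}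
    {P Q : G.Walk u v} (hP : P.IsPath) (hQ : Q.IsPath) : P.length ≤ Q.length * (k - 1) := by
  classical
  induction hq : Q.length using Nat.strong_induction_on generalizing u P with
  | _ q ih =>
  cases P with
  | nil => simp
  | @cons _ w _ huw P =>
  rw [cons_isPath_iff] at hP
  obtain ⟨x, hxQ, W₁, W₂, rfl, hfirst⟩ :=
    P.exists_eq_append_of_end_mem (S := {y | y ∈ Q.support}) Q.end_mem_support
  have hux : u ≠ x := by
    rintro rfl
    exact hP.2 (by simp)
  have hQ₁ : (Q.takeUntil x hxQ).length ≠ 0 := fun h => hux (eq_of_length_eq_zero h)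
  have hsplit : (Q.takeUntil x hxQ).length + (Q.dropUntil x hxQ).length = q := by
    rw [← hq, ← length_append, take_spec]
  have hW₁ : W₁.length + 1 ≤ k - 1 := by
    rcases Nat.eq_zero_or_pos W₁.length with h₀ | h₀
    · omega
    have hcyc := hcirc _ _ <| hP.1.of_append_left.isCycle_cons_append_reverse huw
      (hQ.takeUntil hxQ) hux
      (fun y hy hyQ => hfirst y hy (support_takeUntil_subset_support _ _ hyQ)) h₀.ne'
    rw [length_append, length_cons, length_reverse] at hcyc
    omega
  have hW₂ := ih _ (by omega) hP.1.of_append_right (hQ.dropUntil hxQ) rfl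
  rw [length_cons, length_append]
  calc W₁.length + W₂.length + 1
      ≤ (k - 1) + (Q.dropUntil x hxQ).length * (k - 1) := by omega
    _ = ((Q.dropUntil x hxQ).length + 1) * (k - 1) := by ring
    _ ≤ q * (k - 1) := Nat.mul_le_mul_right _ (by omega)

end Walk

theorem Preconnected.exists_isPath_forall_mem_support_of_induce {s : Set V}
    (hs : (G.induce s).Preconnected) {a b : V} (ha : a ∈ s) (hb : b ∈ s) :
    ∃ p : G.Walk a b, p.IsPath ∧ ∀ x ∈ p.support, x ∈ s := by
  classical
  obtain ⟨W⟩ := hs ⟨a, ha⟩ ⟨b, hb⟩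
  let f := (Embedding.induce (G := G) s).toHom
  refine ⟨W.bypass.map f, W.bypass_isPath.map Subtype.val_injective, fun x hx => ?_⟩
  replace hx : x ∈ (W.bypass.map f).support := hx
  rw [Walk.support_map, List.mem_map] at hx
  obtain ⟨y, -, rfl⟩ := hx
  exact y.2

theorem Adj.exists_isCycle_mem_support [Fintype V] (h3 : 3 ≤ Fintype.card V)
    (h2 : ∀ x : V, (G.induce {x}ᶜ).Preconnected) {u v : V} (huv : G.Adj u v) :
    ∃ (c : V) (C : G.Walk c c), C.IsCycle ∧ u ∈ C.support ∧ v ∈ C.support := by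
  classical
  obtain ⟨z, -, hz⟩ := Finset.exists_mem_notMem_of_card_lt_card (s := {u, v})
    (t := Finset.univ) (Finset.card_le_two.trans_lt (by rw [Finset.card_univ]; omega))
  simp only [Finset.mem_insert, Finset.mem_singleton, not_or] at hz
  obtain ⟨p, -, hp⟩ := (h2 v).exists_isPath_forall_mem_support_of_induce
    (by simpa using huv.ne) (by simpa using hz.2)
  obtain ⟨q, -, hq⟩ := (h2 u).exists_isPath_forall_mem_support_of_induce
    (by simpa using hz.1) (by simpa using huv.ne')
  -- the walk `u ⋯ z ⋯ v` avoids the edge `uv`, as its first half avoids `v` and its second `u`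
  have hedge : s(u, v) ∉ (p.append q).edges := by
    rw [Walk.edges_append, List.mem_append]
    rintro (he | he)
    · exact hp v (p.snd_mem_support_of_mem_edges he) rfl
    · exact hq u (q.fst_mem_support_of_mem_edges he) rfl
  obtain ⟨c, C, hC, he⟩ := adj_and_reachable_delete_edges_iff_exists_cycle.mp
    ⟨huv, reachable_deleteEdges_iff_exists_walk.mpr ⟨_, hedge⟩⟩
  exact ⟨c, C, hC, C.fst_mem_support_of_mem_edges he, C.snd_mem_support_of_mem_edges he⟩

theorem Walk.IsCycle.exists_isCycle_of_adj {c u v w : V} {C : G.Walk c c} (hC : C.IsCycle)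
    (h2 : (G.induce {w}ᶜ).Preconnected) (hv : v ∈ C.support) (hw : w ∈ C.support)
    (hvw : v ≠ w) (hu : u ∉ C.support) (huw : G.Adj u w) :
    ∃ (c' : V) (C' : G.Walk c' c'), C'.IsCycle ∧ u ∈ C'.support ∧ v ∈ C'.support := by
  obtain ⟨W, hW, hWw⟩ := h2.exists_isPath_forall_mem_support_of_induce
    (by simpa using huw.ne) (by simpa using hvw)
  obtain ⟨x, hxC, W₁, W₂, rfl, hfirst⟩ :=
    W.exists_eq_append_of_end_mem (S := {y | y ∈ C.support}) hv
  have hxw : x ≠ w := hWw x (by simp)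
  have hux : u ≠ x := fun h => hu (h ▸ hxC)
  obtain ⟨B, hB, hvB, hBC⟩ := hC.exists_isPath_mem_support hxC hw hv hxw
  have hT : (W₁.append B).IsPath :=
    hW.of_append_left.append hB fun y hy₁ hy₂ => hfirst y hy₁ (hBC y hy₂)
  refine ⟨u, (W₁.append B).append huw.symm.toWalk, hT.isCycle_append huw.symm.isPath_toWalk
    ?_ ?_, by simp, by simp [hvB]⟩
  · simpa using hT.start_notMem_tail_support
  · have h₁ : W₁.length ≠ 0 := fun h => hux (Walk.eq_of_length_eq_zero h)
    have h₂ : B.length ≠ 0 := fun h => hxw (Walk.eq_of_length_eq_zero h)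
    rw [Walk.length_append]
    omega

theorem Reachable.exists_isCycle_mem_support [Fintype V] (h3 : 3 ≤ Fintype.card V)
    (h2 : ∀ x : V, (G.induce {x}ᶜ).Preconnected) {u v : V} (huv : G.Reachable u v)
    (hne : u ≠ v) :
    ∃ (c : V) (C : G.Walk c c), C.IsCycle ∧ u ∈ C.support ∧ v ∈ C.support := by
  obtain ⟨p⟩ := huv
  induction p with
  | nil => exact absurd rfl hne
  | @cons u w v huw p ih =>
    by_cases hwv : w = v
    · subst hwv
      exact huw.exists_isCycle_mem_support h3 h2
    obtain ⟨c, C, hC, hwC, hvC⟩ := ih hwv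
    by_cases huC : u ∈ C.support
    · exact ⟨c, C, hC, huC, hvC⟩
    · exact hC.exists_isCycle_of_adj (h2 w) hvC hwC (Ne.symm hwv) huC huw

end SimpleGraph

/-- in a 2-connected graph of circumference at most `k`, every path has
fewer than `k²` vertices. -/
theorem stmt18 {V : Type*} [Fintype V] (k : ℕ) (G : SimpleGraph V)
    (h3 : 3 ≤ Fintype.card V) (hconn : G.Connected)
    (h2conn : ∀ v : V, (G.induce {v}ᶜ).Connected)
    (hcirc : ∀ (v : V) (w : G.Walk v v), w.IsCycle → w.length ≤ k) :
    ∀ (u v : V) (p : G.Walk u v), p.IsPath → p.support.length < k ^ 2 := by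
  intro u v p hp
  have h2 (x : V) : (G.induce {x}ᶜ).Preconnected := (h2conn x).preconnected
  have hk : 3 ≤ k := by
    obtain ⟨z, hz⟩ := Fintype.exists_ne_of_one_lt_card (by omega) u
    obtain ⟨c, C, hC, -⟩ := (hconn.preconnected u z).exists_isCycle_mem_support h3 h2 hz.symm
    exact hC.three_le_length.trans (hcirc c C hC)
  have hp' : p.length ≤ (k - 1) * (k - 1) := by
    by_cases huv : u = v
    · subst huv
      simp [(Walk.isPath_iff_nil.mp hp).length_eq_zero]
    obtain ⟨c, C, hC, huC, hvC⟩ := p.reachable.exists_isCycle_mem_support h3 h2 huv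
    obtain ⟨Q, hQ, hQC⟩ := hC.exists_isPath_length_lt huC hvC huv
    exact (hp.length_le_length_mul (by omega) hcirc hQ).trans
      (Nat.mul_le_mul_right _ (by have := hcirc c C hC; omega))
  rw [Walk.length_support]
  obtain ⟨m, rfl⟩ : ∃ m, k = m + 1 := ⟨k - 1, by omega⟩
  simp only [Nat.add_sub_cancel] at hp'
  nlinarith
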